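/- Let A ∈ ℂ^{m×m} be invertible, p ∈ [1,∞], q ∈ [0,1], and let B ∈ ℂ^{m×m} satisfy, for every row index i, ‖A(i,:) − B(i,:)‖_p ≤ (1−q) ‖A(i,:)‖_p, and for every column index j, ‖A(:,j) − B(:,j)‖_p ≤ (1−q) ‖A(:,j)‖_p, where ‖·‖_p is the vector ℓ_p norm. Then J(B;A) ≤ m^{1+2C} (1−q)² κ(A)², where C := 1 − 1/p + |1/2 − 1/p| and κ(A) := ‖A‖₂ ‖A⁻¹‖₂. Consequently the minimum of J(·;A) over all matrices X whose support is contained in the support of B is at most m^{1+2C} (1−q)² κ(A)². -/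

import Mathlib

/-!
Put `D = B - A`. Both terms of `J(B;A)` are at most `½ ‖D‖_F² ‖A⁻¹‖₂²`, because
`‖M N‖_F ≤ ‖M‖₂ ‖N‖_F` (apply `M` column by column) and, by conjugate transposition,
`‖M N‖_F ≤ ‖M‖_F ‖N‖₂`. Comparing `ℓ_p` with `ℓ_2` through `ℓ_1` when `p ≤ 2` and through `ℓ_∞`
when `p ≥ 2` loses a factor `√m` at most, so the column hypothesis gives
`‖D(:,j)‖₂ ≤ √m (1-q) ‖A(:,j)‖₂ ≤ √m (1-q) ‖A‖₂`, hence `‖D‖_F² ≤ m² (1-q)² ‖A‖₂²`.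
Finally `m² ≤ m^{1+2C}` since `C ≥ 1/2`, and `B` itself is admissible for the minimum.
-/

open scoped Matrix ENNReal

/-- The spectral norm (largest singular value): the operator norm of the matrix as a map
between Euclidean spaces. -/
noncomputable def specNorm {m n : ℕ} (M : Matrix (Fin m) (Fin n) ℂ) : ℝ :=
  ‖LinearMap.toContinuousLinearMap (Matrix.toEuclideanLin M)‖

/-- The vector ℓ_p norm. -/
noncomputable def lpnorm (p : ℝ≥0∞) [Fact (1 ≤ p)] {k : ℕ} (x : Fin k → ℂ) : ℝ :=
  ‖(WithLp.equiv p (Fin k → ℂ)).symm x‖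

/-- Squared Frobenius norm. -/
noncomputable def frobSq {m n : ℕ} (M : Matrix (Fin m) (Fin n) ℂ) : ℝ :=
  ∑ i, ∑ j, ‖M i j‖ ^ 2

/-- The misfit functional `J(X;A) = ½‖(X-A)A⁻¹‖_F² + ½‖A⁻¹(X-A)‖_F²` for invertible
square `A`. -/
noncomputable def JmisInv {m : ℕ} (X A : Matrix (Fin m) (Fin m) ℂ) : ℝ :=
  (1 / 2) * frobSq ((X - A) * A⁻¹) + (1 / 2) * frobSq (A⁻¹ * (X - A))

theorem Finset.sum_rpow_le_rpow_sum {ι : Type*} {s : Finset ι} {f : ι → ℝ}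
    (hf : ∀ i ∈ s, 0 ≤ f i) {r : ℝ} (hr : 1 ≤ r) :
    ∑ i ∈ s, f i ^ r ≤ (∑ i ∈ s, f i) ^ r := by
  have hS : 0 ≤ ∑ i ∈ s, f i := Finset.sum_nonneg hf
  have hr' : 1 + (r - 1) ≠ 0 := by linarith
  calc ∑ i ∈ s, f i ^ r = ∑ i ∈ s, f i * f i ^ (r - 1) := by
        refine Finset.sum_congr rfl fun i hi => ?_
        rw [← Real.rpow_one_add' (hf i hi) hr', add_sub_cancel]
    _ ≤ ∑ i ∈ s, f i * (∑ j ∈ s, f j) ^ (r - 1) := by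
        gcongr with i hi
        · exact hf i hi
        · exact hf i hi
        · exact Finset.single_le_sum hf hi
    _ = (∑ i ∈ s, f i) ^ r := by
        rw [← Finset.sum_mul, ← Real.rpow_one_add' hS hr', add_sub_cancel]

namespace PiLp

variable {ι : Type*} [Fintype ι] {β : ι → Type*} [∀ i, SeminormedAddCommGroup (β i)]

theorem norm_toLp_le_norm_toLp_of_le {p q : ℝ≥0∞} [Fact (1 ≤ p)] (hpq : p ≤ q)
    (x : ∀ i, β i) : ‖WithLp.toLp q x‖ ≤ ‖WithLp.toLp p x‖ := by
  rcases eq_or_ne q ∞ with rfl | hq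
  · rw [norm_eq_ciSup]
    exact Real.iSup_le (fun i => norm_apply_le (WithLp.toLp p x) i) (norm_nonneg _)
  have hp : p ≠ ∞ := ne_top_of_le_ne_top hq hpq
  have hp0 : 0 < p.toReal := ENNReal.toReal_pos (zero_lt_one.trans_le Fact.out).ne' hp
  have hq0 : 0 < q.toReal := hp0.trans_le (ENNReal.toReal_mono hq hpq)
  have hr : 1 ≤ q.toReal / p.toReal := (one_le_div hp0).2 (ENNReal.toReal_mono hq hpq)
  have hsum : ∑ i, ‖x i‖ ^ q.toReal = ∑ i, (‖x i‖ ^ p.toReal) ^ (q.toReal / p.toReal) := by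
    refine Finset.sum_congr rfl fun i _ => ?_
    rw [← Real.rpow_mul (norm_nonneg _), mul_div_cancel₀ _ hp0.ne']
  rw [norm_eq_sum hq0, norm_eq_sum hp0]
  calc (∑ i, ‖x i‖ ^ q.toReal) ^ (1 / q.toReal)
      ≤ ((∑ i, ‖x i‖ ^ p.toReal) ^ (q.toReal / p.toReal)) ^ (1 / q.toReal) := by
        rw [hsum]
        gcongr
        exact Finset.sum_rpow_le_rpow_sum (fun i _ => by positivity) hr
    _ = (∑ i, ‖x i‖ ^ p.toReal) ^ (1 / p.toReal) := by
        rw [← Real.rpow_mul (Finset.sum_nonneg fun i _ => by positivity)]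
        congr 1
        field_simp

theorem norm_toLp_one_le_sqrt_card_mul (x : ∀ i, β i) :
    ‖WithLp.toLp 1 x‖ ≤ √(Fintype.card ι) * ‖WithLp.toLp 2 x‖ := by
  rw [norm_eq_of_L1, norm_eq_of_L2]
  simpa using Real.sum_mul_le_sqrt_mul_sqrt Finset.univ (fun _ => (1 : ℝ)) (fun i => ‖x i‖)

theorem norm_toLp_two_le_sqrt_card_mul (x : ∀ i, β i) :
    ‖WithLp.toLp 2 x‖ ≤ √(Fintype.card ι) * ‖WithLp.toLp ∞ x‖ := by
  have := (lipschitzWith_toLp 2 β).norm_le_mul rfl x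
  rw [norm_toLp]
  convert this using 2
  simp [Real.sqrt_eq_rpow]

theorem norm_toLp_two_le_of_norm_toLp_le {p : ℝ≥0∞} [Fact (1 ≤ p)] {x y : ∀ i, β i} {c : ℝ}
    (hc : 0 ≤ c) (h : ‖WithLp.toLp p x‖ ≤ c * ‖WithLp.toLp p y‖) :
    ‖WithLp.toLp 2 x‖ ≤ √(Fintype.card ι) * (c * ‖WithLp.toLp 2 y‖) := by
  rcases le_total p 2 with hp | hp
  · calc ‖WithLp.toLp 2 x‖ ≤ ‖WithLp.toLp p x‖ := norm_toLp_le_norm_toLp_of_le hp x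
      _ ≤ c * ‖WithLp.toLp p y‖ := h
      _ ≤ c * ‖WithLp.toLp 1 y‖ := by gcongr; exact norm_toLp_le_norm_toLp_of_le Fact.out y
      _ ≤ c * (√(Fintype.card ι) * ‖WithLp.toLp 2 y‖) := by
        gcongr; exact norm_toLp_one_le_sqrt_card_mul y
      _ = √(Fintype.card ι) * (c * ‖WithLp.toLp 2 y‖) := by ring
  · calc ‖WithLp.toLp 2 x‖ ≤ √(Fintype.card ι) * ‖WithLp.toLp ∞ x‖ :=
          norm_toLp_two_le_sqrt_card_mul x
      _ ≤ √(Fintype.card ι) * ‖WithLp.toLp p x‖ := by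
        gcongr; exact norm_toLp_le_norm_toLp_of_le le_top x
      _ ≤ √(Fintype.card ι) * (c * ‖WithLp.toLp 2 y‖) := by
        gcongr; exact h.trans (by gcongr; exact norm_toLp_le_norm_toLp_of_le hp y)

end PiLp

section Matrix

variable {k m n : ℕ}

open scoped Matrix.Norms.L2Operator in
theorem specNorm_conjTranspose (M : Matrix (Fin m) (Fin n) ℂ) : specNorm Mᴴ = specNorm M :=
  Matrix.l2_opNorm_conjTranspose M

open scoped Matrix.Norms.L2Operator in
theorem norm_toLp_mulVec_le_specNorm_mul (M : Matrix (Fin m) (Fin n) ℂ) (x : Fin n → ℂ) :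
    ‖WithLp.toLp 2 (M *ᵥ x)‖ ≤ specNorm M * ‖WithLp.toLp 2 x‖ :=
  Matrix.l2_opNorm_mulVec M (WithLp.toLp 2 x)

theorem norm_toLp_col_le_specNorm (M : Matrix (Fin m) (Fin n) ℂ) (j : Fin n) :
    ‖WithLp.toLp 2 (M.col j)‖ ≤ specNorm M := by
  simpa [Matrix.mulVec_single_one] using norm_toLp_mulVec_le_specNorm_mul M (Pi.single j 1)

theorem frobSq_eq_sum_norm_col_sq (M : Matrix (Fin m) (Fin n) ℂ) :
    frobSq M = ∑ j, ‖WithLp.toLp 2 (M.col j)‖ ^ 2 := by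
  rw [frobSq, Finset.sum_comm]
  simp only [EuclideanSpace.norm_sq_eq, Matrix.col_apply]

theorem frobSq_nonneg (M : Matrix (Fin m) (Fin n) ℂ) : 0 ≤ frobSq M := by
  unfold frobSq; positivity

theorem frobSq_sub_comm (M N : Matrix (Fin m) (Fin n) ℂ) : frobSq (M - N) = frobSq (N - M) := by
  simp only [frobSq, Matrix.sub_apply, norm_sub_rev]

theorem frobSq_conjTranspose (M : Matrix (Fin m) (Fin n) ℂ) : frobSq Mᴴ = frobSq M := by
  rw [frobSq, Finset.sum_comm, frobSq]
  simp

theorem frobSq_mul_le_specNorm_sq_mul (M : Matrix (Fin k) (Fin m) ℂ)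
    (N : Matrix (Fin m) (Fin n) ℂ) : frobSq (M * N) ≤ specNorm M ^ 2 * frobSq N := by
  rw [frobSq_eq_sum_norm_col_sq, frobSq_eq_sum_norm_col_sq, Finset.mul_sum]
  gcongr with j
  rw [← mul_pow]
  gcongr
  exact norm_toLp_mulVec_le_specNorm_mul M (N.col j)

theorem frobSq_mul_le_mul_specNorm_sq (M : Matrix (Fin k) (Fin m) ℂ)
    (N : Matrix (Fin m) (Fin n) ℂ) : frobSq (M * N) ≤ frobSq M * specNorm N ^ 2 := by
  rw [← frobSq_conjTranspose, Matrix.conjTranspose_mul, ← frobSq_conjTranspose M,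
    ← specNorm_conjTranspose N, mul_comm]
  exact frobSq_mul_le_specNorm_sq_mul _ _

theorem frobSq_le_of_norm_toLp_col_le (M : Matrix (Fin m) (Fin n) ℂ) {c : ℝ}
    (h : ∀ j, ‖WithLp.toLp 2 (M.col j)‖ ≤ c) : frobSq M ≤ n * c ^ 2 := by
  rw [frobSq_eq_sum_norm_col_sq]
  calc ∑ j, ‖WithLp.toLp 2 (M.col j)‖ ^ 2 ≤ ∑ _j : Fin n, c ^ 2 := by
        gcongr with j
        exact h j
    _ = n * c ^ 2 := by simp

theorem frobSq_le_of_norm_toLp_col_le_mul {p : ℝ≥0∞} [Fact (1 ≤ p)]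
    {D A : Matrix (Fin m) (Fin n) ℂ} {c : ℝ} (hc : 0 ≤ c)
    (h : ∀ j, ‖WithLp.toLp p (D.col j)‖ ≤ c * ‖WithLp.toLp p (A.col j)‖) :
    frobSq D ≤ m * n * c ^ 2 * specNorm A ^ 2 := by
  calc frobSq D ≤ n * (√m * (c * specNorm A)) ^ 2 := by
        refine frobSq_le_of_norm_toLp_col_le D fun j => ?_
        have hj := PiLp.norm_toLp_two_le_of_norm_toLp_le hc (h j)
        rw [Fintype.card_fin] at hj
        exact hj.trans (by gcongr; exact norm_toLp_col_le_specNorm A j)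
    _ = m * n * c ^ 2 * specNorm A ^ 2 := by
        rw [mul_pow, mul_pow, Real.sq_sqrt (Nat.cast_nonneg m)]
        ring

end Matrix

theorem JmisInv_nonneg {m : ℕ} (X A : Matrix (Fin m) (Fin m) ℂ) : 0 ≤ JmisInv X A := by
  unfold JmisInv
  have := frobSq_nonneg ((X - A) * A⁻¹)
  have := frobSq_nonneg (A⁻¹ * (X - A))
  positivity

theorem JmisInv_le_frobSq_mul {m : ℕ} (X A : Matrix (Fin m) (Fin m) ℂ) :
    JmisInv X A ≤ frobSq (X - A) * specNorm A⁻¹ ^ 2 := by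
  have h₁ := frobSq_mul_le_mul_specNorm_sq (X - A) A⁻¹
  have h₂ := frobSq_mul_le_specNorm_sq_mul A⁻¹ (X - A)
  unfold JmisInv
  linarith

theorem two_le_one_add_two_mul_sub_add_abs (t : ℝ) : 2 ≤ 1 + 2 * (1 - t + |1 / 2 - t|) := by
  have := neg_abs_le (1 / 2 - t)
  linarith

theorem Nat.cast_pow_le_rpow_of_le (m : ℕ) {n : ℕ} {e : ℝ} (hn : n ≠ 0) (he : n ≤ e) :
    (m : ℝ) ^ n ≤ (m : ℝ) ^ e := by
  rcases m.eq_zero_or_pos with rfl | hm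
  · have : 0 < e := lt_of_lt_of_le (by exact_mod_cast Nat.pos_of_ne_zero hn) he
    simp [hn, Real.zero_rpow this.ne']
  · rw [← Real.rpow_natCast]
    exact Real.rpow_le_rpow_of_exponent_le (by exact_mod_cast hm) he

theorem stmt10_general {m : ℕ} (A B : Matrix (Fin m) (Fin m) ℂ)
    (p : ℝ≥0∞) [Fact (1 ≤ p)] (q : ℝ) (hq1 : q ≤ 1)
    (hcol : ∀ j : Fin m,
      lpnorm p (fun i => A i j - B i j) ≤ (1 - q) * lpnorm p (fun i => A i j)) :
    JmisInv B A ≤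
      (m : ℝ) ^ (1 + 2 * (1 - (1 / p).toReal + |1 / 2 - (1 / p).toReal|))
        * (1 - q) ^ 2 * (specNorm A * specNorm A⁻¹) ^ 2 ∧
    sInf {t : ℝ | ∃ X : Matrix (Fin m) (Fin m) ℂ,
        (∀ i j, B i j = 0 → X i j = 0) ∧ t = JmisInv X A} ≤
      (m : ℝ) ^ (1 + 2 * (1 - (1 / p).toReal + |1 / 2 - (1 / p).toReal|))
        * (1 - q) ^ 2 * (specNorm A * specNorm A⁻¹) ^ 2 := by
  have hJ : JmisInv B A ≤ (m : ℝ) ^ 2 * (1 - q) ^ 2 * (specNorm A * specNorm A⁻¹) ^ 2 :=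
    calc JmisInv B A ≤ frobSq (A - B) * specNorm A⁻¹ ^ 2 := by
          rw [frobSq_sub_comm]; exact JmisInv_le_frobSq_mul B A
      _ ≤ (m * m * (1 - q) ^ 2 * specNorm A ^ 2) * specNorm A⁻¹ ^ 2 := by
          gcongr
          exact frobSq_le_of_norm_toLp_col_le_mul (sub_nonneg.2 hq1) hcol
      _ = (m : ℝ) ^ 2 * (1 - q) ^ 2 * (specNorm A * specNorm A⁻¹) ^ 2 := by ring
  have hm := Nat.cast_pow_le_rpow_of_le m two_ne_zero
    (by exact_mod_cast two_le_one_add_two_mul_sub_add_abs (1 / p).toReal)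
  have hbound : JmisInv B A ≤
      (m : ℝ) ^ (1 + 2 * (1 - (1 / p).toReal + |1 / 2 - (1 / p).toReal|))
        * (1 - q) ^ 2 * (specNorm A * specNorm A⁻¹) ^ 2 :=
    hJ.trans (by gcongr)
  refine ⟨hbound, le_trans (csInf_le ⟨0, ?_⟩ ⟨B, fun _ _ h => h, rfl⟩) hbound⟩
  rintro _ ⟨X, -, rfl⟩
  exact JmisInv_nonneg X A

/-- if the rows and columns of `B` approximate those of the invertible matrix
`A` to within a factor `1 - q` in the ℓ_p norm, then `J(B;A) ≤ m^{1+2C} (1-q)² κ(A)²`,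
and consequently the infimum of `J(·;A)` over matrices supported inside the support of `B`
is at most this bound. -/
theorem stmt10 {m : ℕ} (A B : Matrix (Fin m) (Fin m) ℂ) (hA : IsUnit A.det)
    (p : ℝ≥0∞) [Fact (1 ≤ p)] (q : ℝ) (hq0 : 0 ≤ q) (hq1 : q ≤ 1)
    (hrow : ∀ i : Fin m,
      lpnorm p (fun j => A i j - B i j) ≤ (1 - q) * lpnorm p (fun j => A i j))
    (hcol : ∀ j : Fin m,
      lpnorm p (fun i => A i j - B i j) ≤ (1 - q) * lpnorm p (fun i => A i j)) :
    JmisInv B A ≤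
      (m : ℝ) ^ (1 + 2 * (1 - (1 / p).toReal + |1 / 2 - (1 / p).toReal|))
        * (1 - q) ^ 2 * (specNorm A * specNorm A⁻¹) ^ 2 ∧
    sInf {t : ℝ | ∃ X : Matrix (Fin m) (Fin m) ℂ,
        (∀ i j, B i j = 0 → X i j = 0) ∧ t = JmisInv X A} ≤
      (m : ℝ) ^ (1 + 2 * (1 - (1 / p).toReal + |1 / 2 - (1 / p).toReal|))
        * (1 - q) ^ 2 * (specNorm A * specNorm A⁻¹) ^ 2 :=
  stmt10_general A B p q hq1 hcol
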